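/- arXiv:math/0403484 — 2 statements merged into one kernel-verified Lean document; each statement's English description precedes it below -/
import Mathlib

section
/- Let p, q ∈ k[x,y] with k an algebraically closed field, deg p = n, deg q = m, and suppose the leading forms of p and q have no common nontrivial zero. Then every polynomial in the ideal generated by p and q of degree at most n+m-1 can be written as A·p + B·q with deg A ≤ m-1 and deg B ≤ n-1. -/
/-!
Write `f = A p + B q` and let `D = max (deg (A p)) (deg (B q))`. If `D ≥ n + m` then `D > deg f`,
so the degree-`D` parts give `A_a u + B_b v = 0` for the leading forms `u`, `v` of `p`, `q`.
Having no common zero off the origin, `u` and `v` are coprime (Nullstellensatz), hence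
`A_a = c v` with `c` homogeneous, and `(A - c q, B + c p)` is a representation with smaller `D`.
-/

namespace MvPolynomial

section CommRing

variable {σ R : Type*} [CommRing R] {φ ψ : MvPolynomial σ R}

theorem totalDegree_le_pred_of_homogeneousComponent_eq_zero {D : ℕ} (hφ : φ.totalDegree ≤ D)
    (h : homogeneousComponent D φ = 0) : φ.totalDegree ≤ D - 1 := by
  refine Finset.sup_le fun d hd => ?_
  have hdD : d.degree ≠ D := fun hdD => by
    have := coeff_homogeneousComponent D φ d
    rw [h, if_pos hdD, coeff_zero] at this
    exact mem_support_iff.mp hd this.symm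
  have : d.degree ≤ φ.totalDegree := le_totalDegree hd
  change d.degree ≤ D - 1
  omega

theorem homogeneousComponent_totalDegree_ne_zero (hφ : φ ≠ 0) :
    homogeneousComponent φ.totalDegree φ ≠ 0 := by
  intro h
  have hdeg : φ.totalDegree = 0 := by
    have := totalDegree_le_pred_of_homogeneousComponent_eq_zero le_rfl h
    omega
  rw [hdeg, homogeneousComponent_eq_self ((totalDegree_zero_iff_isHomogeneous σ).mp hdeg)] at h
  exact hφ h

attribute [local instance] MvPolynomial.gradedAlgebra in
theorem IsHomogeneous.homogeneousComponent_mul_left {i n : ℕ} (hφ : φ.IsHomogeneous i)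
    (hin : i ≤ n) : homogeneousComponent n (φ * ψ) = φ * homogeneousComponent (n - i) ψ := by
  rw [← decomposition.decompose'_apply, ← decomposition.decompose'_apply]
  exact DirectSum.coe_decompose_mul_of_left_mem_of_le (homogeneousSubmodule σ R) (b := ψ)
    ((mem_homogeneousSubmodule i φ).mpr hφ) hin

theorem homogeneousComponent_add_mul {i j : ℕ} (hφ : φ.totalDegree ≤ i) (hψ : ψ.totalDegree ≤ j) :
    homogeneousComponent (i + j) (φ * ψ) =
      homogeneousComponent i φ * homogeneousComponent j ψ := by
  conv_lhs => rw [← sum_homogeneousComponent φ, Finset.sum_mul, map_sum]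
  rw [Finset.sum_eq_single i]
  · rw [(homogeneousComponent_isHomogeneous i φ).homogeneousComponent_mul_left (by omega),
      Nat.add_sub_cancel_left]
  · intro l hl hli
    have hl := Finset.mem_range.mp hl
    rw [(homogeneousComponent_isHomogeneous l φ).homogeneousComponent_mul_left (by omega),
      homogeneousComponent_eq_zero (i + j - l) ψ (by omega), mul_zero]
  · intro hi
    rw [homogeneousComponent_eq_zero i φ (by simpa using hi), zero_mul, map_zero]

theorem IsHomogeneous.exists_isHomogeneous_of_dvd {m s : ℕ} (hφ : φ.IsHomogeneous m)
    (hψ : ψ.IsHomogeneous s) (hms : m ≤ s) (h : φ ∣ ψ) :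
    ∃ c : MvPolynomial σ R, c.IsHomogeneous (s - m) ∧ ψ = φ * c := by
  obtain ⟨c, rfl⟩ := h
  exact ⟨homogeneousComponent (s - m) c, homogeneousComponent_isHomogeneous _ _, by
    rw [← hφ.homogeneousComponent_mul_left hms, homogeneousComponent_eq_self hψ]⟩

theorem totalDegree_le_sub_of_totalDegree_mul_le [IsDomain R] {D : ℕ} (hψ : ψ ≠ 0)
    (h : (φ * ψ).totalDegree ≤ D) : φ.totalDegree ≤ D - ψ.totalDegree := by
  rcases eq_or_ne φ 0 with rfl | hφ
  · simp
  · rw [totalDegree_mul_of_isDomain hφ hψ] at h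
    omega

end CommRing

section Nullstellensatz

variable {σ k : Type*} [Field k] [IsAlgClosed k] [Finite σ] [Nontrivial σ]

theorem exists_ne_zero_eval_eq_zero_of_prime {d : MvPolynomial σ k} (hd : Prime d) :
    ∃ z : σ → k, z ≠ 0 ∧ eval z d = 0 := by
  by_contra! h
  have hdvd : ∀ w : MvPolynomial σ k, eval 0 w = 0 → d ∣ w := by
    intro w hw
    have hzero : zeroLocus k (Ideal.span {d}) ⊆ {0} := fun z hz => by
      by_contra hz0
      exact h z hz0 (by simpa [coe_aeval_eq_eval] using hz d (Ideal.subset_span rfl))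
    have hw : w ∈ vanishingIdeal k (zeroLocus k (Ideal.span {d})) :=
      vanishingIdeal_anti_mono hzero (by simpa [coe_aeval_eq_eval] using hw)
    rwa [vanishingIdeal_zeroLocus_eq_radical,
      ((Ideal.span_singleton_prime hd.ne_zero).mpr hd).radical,
      Ideal.mem_span_singleton] at hw
  obtain ⟨i, j, hij⟩ := exists_pair_ne σ
  have hXi : X i ∣ d := hd.irreducible.dvd_symm X_prime.irreducible (hdvd _ (by simp))
  exact hij (X_dvd_X.mp (hXi.trans (hdvd _ (by simp))))

theorem isRelPrime_of_eval_eq_zero {u v : MvPolynomial σ k} (hu : u ≠ 0)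
    (h : ∀ z : σ → k, eval z u = 0 → eval z v = 0 → z = 0) : IsRelPrime u v := by
  refine (UniqueFactorizationMonoid.isRelPrime_iff_no_prime_factors hu).mpr
    fun d ⟨a, hau⟩ ⟨b, hbv⟩ hd => ?_
  obtain ⟨z, hz, hdz⟩ := exists_ne_zero_eval_eq_zero_of_prime hd
  exact hz (h z (by simp [hau, hdz]) (by simp [hbv, hdz]))

end Nullstellensatz

section Descent

variable {σ k : Type*} [Field k] {p q f : MvPolynomial σ k}

theorem exists_mul_add_mul_eq_totalDegree_le_pred (hp : p ≠ 0) (hq : q ≠ 0)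
    (hcop : IsRelPrime (homogeneousComponent q.totalDegree q)
      (homogeneousComponent p.totalDegree p))
    {D : ℕ} (hD : p.totalDegree + q.totalDegree ≤ D) (hf : f.totalDegree < D)
    {A B : MvPolynomial σ k} (hAB : A * p + B * q = f)
    (hA : (A * p).totalDegree ≤ D) (hB : (B * q).totalDegree ≤ D) :
    ∃ A' B' : MvPolynomial σ k, A' * p + B' * q = f ∧
      (A' * p).totalDegree ≤ D - 1 ∧ (B' * q).totalDegree ≤ D - 1 := by
  set n := p.totalDegree
  set m := q.totalDegree
  set u := homogeneousComponent n p
  set v := homogeneousComponent m q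
  set a := D - n with ha
  have hAp : homogeneousComponent D (A * p) = homogeneousComponent a A * u := by
    rw [show D = a + n by omega]
    exact homogeneousComponent_add_mul (totalDegree_le_sub_of_totalDegree_mul_le hp hA) le_rfl
  set b := D - m with hb
  have hBq : homogeneousComponent D (B * q) = homogeneousComponent b B * v := by
    rw [show D = b + m by omega]
    exact homogeneousComponent_add_mul (totalDegree_le_sub_of_totalDegree_mul_le hq hB) le_rfl
  have htop : homogeneousComponent D (A * p) + homogeneousComponent D (B * q) = 0 := by
    rw [← map_add, hAB, homogeneousComponent_eq_zero D f hf]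
  have hvA : v ∣ homogeneousComponent a A :=
    hcop.dvd_of_dvd_mul_right ⟨-homogeneousComponent b B, by
      rw [← hAp]; linear_combination htop - hBq⟩
  obtain ⟨c, hc, hcA⟩ := (homogeneousComponent_isHomogeneous m q).exists_isHomogeneous_of_dvd
    (homogeneousComponent_isHomogeneous a A) (by omega) hvA
  have hcpq : homogeneousComponent D (c * (p * q)) = c * (u * v) := by
    rw [hc.homogeneousComponent_mul_left (by omega), show D - (a - m) = n + m by omega,
      homogeneousComponent_add_mul le_rfl le_rfl]
  have hcdeg : (c * (p * q)).totalDegree ≤ D :=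
    (totalDegree_mul _ _).trans (by
      have := hc.totalDegree_le
      have := totalDegree_mul p q
      omega)
  refine ⟨A - c * q, B + c * p, by rw [← hAB]; ring, ?_, ?_⟩
  · have hA' : (A - c * q) * p = A * p - c * (p * q) := by ring
    rw [hA']
    refine totalDegree_le_pred_of_homogeneousComponent_eq_zero
      ((totalDegree_sub _ _).trans (max_le hA hcdeg)) ?_
    rw [map_sub, hAp, hcpq, hcA]
    ring
  · have hB' : (B + c * p) * q = B * q + c * (p * q) := by ring
    rw [hB']
    refine totalDegree_le_pred_of_homogeneousComponent_eq_zero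
      ((totalDegree_add _ _).trans (max_le hB hcdeg)) ?_
    rw [map_add, hcpq, eq_neg_of_add_eq_zero_right htop, hAp, hcA]
    ring

theorem exists_mul_add_mul_eq_totalDegree_le (hp : p ≠ 0) (hq : q ≠ 0)
    (hcop : IsRelPrime (homogeneousComponent q.totalDegree q)
      (homogeneousComponent p.totalDegree p))
    {N : ℕ} (hN : p.totalDegree + q.totalDegree ≤ N + 1) (hf : f.totalDegree ≤ N)
    (hmem : f ∈ Ideal.span {p, q}) :
    ∃ A B : MvPolynomial σ k, A * p + B * q = f ∧
      (A * p).totalDegree ≤ N ∧ (B * q).totalDegree ≤ N := by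
  suffices h : ∀ D, ∀ A B : MvPolynomial σ k, A * p + B * q = f →
      (A * p).totalDegree ≤ D → (B * q).totalDegree ≤ D →
      ∃ A B : MvPolynomial σ k, A * p + B * q = f ∧
        (A * p).totalDegree ≤ N ∧ (B * q).totalDegree ≤ N by
    obtain ⟨A, B, hAB⟩ := Ideal.mem_span_pair.mp hmem
    exact h _ A B hAB (le_max_left _ _) (le_max_right _ _)
  intro D
  induction D using Nat.strong_induction_on with
  | _ D ih =>
    intro A B hAB hA hB
    by_cases hDN : D ≤ N
    · exact ⟨A, B, hAB, hA.trans hDN, hB.trans hDN⟩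
    obtain ⟨A', B', hAB', hA', hB'⟩ :=
      exists_mul_add_mul_eq_totalDegree_le_pred hp hq hcop (by omega) (by omega) hAB hA hB
    exact ih (D - 1) (by omega) A' B' hAB' hA' hB'

end Descent

end MvPolynomial

open MvPolynomial

theorem stmt6 {k : Type*} [Field k] [IsAlgClosed k]
    (p q : MvPolynomial (Fin 2) k) (n m : ℕ)
    (hp : p ≠ 0) (hq : q ≠ 0)
    (hpn : p.totalDegree = n) (hqm : q.totalDegree = m)
    (hlead : ∀ a b : k, ¬(a = 0 ∧ b = 0) →
      ¬(eval ![a, b] (homogeneousComponent n p) = 0 ∧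
        eval ![a, b] (homogeneousComponent m q) = 0)) :
    ∀ f ∈ Ideal.span {p, q}, f.totalDegree ≤ n + m - 1 →
      ∃ A B : MvPolynomial (Fin 2) k,
        f = A * p + B * q ∧ A.totalDegree ≤ m - 1 ∧ B.totalDegree ≤ n - 1 := by
  subst hpn hqm
  intro f hf hdf
  have hcop : IsRelPrime (homogeneousComponent q.totalDegree q)
      (homogeneousComponent p.totalDegree p) := by
    refine isRelPrime_of_eval_eq_zero (homogeneousComponent_totalDegree_ne_zero hq)
      fun z hzq hzp => ?_
    have hz : ![z 0, z 1] = z := by ext i; fin_cases i <;> rfl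
    by_contra hz0
    refine hlead (z 0) (z 1) (fun h => hz0 ?_) ⟨hz ▸ hzp, hz ▸ hzq⟩
    ext i; fin_cases i <;> simp [h.1, h.2]
  obtain ⟨A, B, hAB, hA, hB⟩ :=
    exists_mul_add_mul_eq_totalDegree_le hp hq hcop (by omega) hdf hf
  have := totalDegree_le_sub_of_totalDegree_mul_le hp hA
  have := totalDegree_le_sub_of_totalDegree_mul_le hq hB
  exact ⟨A, B, hAB.symm, by omega, by omega⟩
end

section
/- For nonzero homogeneous polynomials P of degree n and Q of degree m in two variables with no common nontrivial zero over an algebraically closed field, the map (A,B) ↦ A·P + B·Q from pairs of homogeneous polynomials of degrees m-1 and n-1 to homogeneous polynomials of degree n+m-1 is a linear isomorphism. -/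
/-!
Dehomogenizing at `y = 1` identifies forms of degree `d` in two variables with polynomials of
degree at most `d`, so both sides have dimension `n + m` and it suffices to prove injectivity.
The hypothesis at `(1, 0)` says that one of `P`, `Q`, say `P`, keeps its full degree `n` after
dehomogenizing, and the hypothesis at the points `(a, 1)` says that the dehomogenizations `p`, `q`
are coprime. From `a p + b q = 0` we get `p ∣ b` with `deg b < n`, so `b = 0`, hence `B = 0` and
then `A = 0`.
-/

open MvPolynomial

open Polynomial in
lemma Polynomial.eval_one_zero_homogenize {R : Type*} [CommSemiring R] (p : R[X]) (n : ℕ) :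
    MvPolynomial.eval ![1, 0] (p.homogenize n) = p.coeff n := by
  rw [homogenize, map_sum, Finset.sum_eq_single (n, 0)]
  · simp [MvPolynomial.eval_monomial]
  · rintro ⟨i, j⟩ hij hne
    have hj : j ≠ 0 := by rintro rfl; simp_all
    simp [MvPolynomial.eval_monomial, hj]
  · simp

lemma Polynomial.mem_degreeLT_succ_iff {R : Type*} [Semiring R] {p : Polynomial R} {d : ℕ} :
    p ∈ degreeLT R (d + 1) ↔ p.natDegree ≤ d := by
  rw [degreeLT_succ_eq_degreeLE, mem_degreeLE, natDegree_le_iff_degree_le]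

namespace MvPolynomial

section Dehomogenize

variable {R : Type*} [CommSemiring R]

noncomputable def dehomogenize : MvPolynomial (Fin 2) R →ₐ[R] Polynomial R :=
  aeval ![Polynomial.X, 1]

lemma aeval_dehomogenize (a : R) (p : MvPolynomial (Fin 2) R) :
    Polynomial.aeval a (dehomogenize p) = eval ![a, 1] p := by
  rw [dehomogenize, comp_aeval_apply, ← coe_aeval_eq_eval]
  exact congrArg (fun f => aeval f p) (by ext i; fin_cases i <;> simp)

lemma dehomogenize_homogenize {p : Polynomial R} {d : ℕ} (hp : p.natDegree ≤ d) :
    dehomogenize (p.homogenize d) = p :=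
  Polynomial.aeval_homogenize_X_one p hp

variable {q : MvPolynomial (Fin 2) R} {d : ℕ}

lemma IsHomogeneous.natDegree_dehomogenize_le (hq : q.IsHomogeneous d) :
    (dehomogenize q).natDegree ≤ d := by
  rw [q.as_sum, map_sum]
  refine Polynomial.natDegree_sum_le_of_forall_le _ _ fun s hs => ?_
  have hs' : s 0 + s 1 = d := by
    simpa [Finsupp.weight_apply, Finsupp.sum_fintype, Fin.sum_univ_two] using
      hq (mem_support_iff.mp hs)
  rw [dehomogenize, aeval_monomial, Finsupp.prod_fintype _ _ (fun _ => pow_zero _)]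
  simp only [Fin.prod_univ_two, Matrix.cons_val_zero, Matrix.cons_val_one, one_pow, mul_one]
  exact (Polynomial.natDegree_C_mul_le _ _).trans
    ((Polynomial.natDegree_X_pow_le _).trans (by omega))

lemma IsHomogeneous.homogenize_dehomogenize (hq : q.IsHomogeneous d) :
    (dehomogenize q).homogenize d = q :=
  Polynomial.homogenize_eq_of_isHomogeneous hq rfl

lemma IsHomogeneous.eval_one_zero (hq : q.IsHomogeneous d) :
    eval ![1, 0] q = (dehomogenize q).coeff d := by
  conv_lhs => rw [← hq.homogenize_dehomogenize]
  exact Polynomial.eval_one_zero_homogenize _ _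

variable (R) in
noncomputable def homogeneousSubmoduleEquivDegreeLT (d : ℕ) :
    homogeneousSubmodule (Fin 2) R d ≃ₗ[R] Polynomial.degreeLT R (d + 1) where
  toFun q :=
    ⟨dehomogenize q.1, Polynomial.mem_degreeLT_succ_iff.2 q.2.natDegree_dehomogenize_le⟩
  invFun p := ⟨p.1.homogenize d, Polynomial.isHomogeneous_homogenize _⟩
  map_add' _ _ := by ext1; simp
  map_smul' _ _ := by ext1; simp
  left_inv q := Subtype.ext q.2.homogenize_dehomogenize
  right_inv p := Subtype.ext <| dehomogenize_homogenize <| Polynomial.mem_degreeLT_succ_iff.1 p.2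

instance (d : ℕ) : Module.Finite R (homogeneousSubmodule (Fin 2) R d) :=
  .equiv (homogeneousSubmoduleEquivDegreeLT R d).symm

lemma finrank_homogeneousSubmodule_fin_two [StrongRankCondition R] (d : ℕ) :
    Module.finrank R (homogeneousSubmodule (Fin 2) R d) = d + 1 := by
  rw [(homogeneousSubmoduleEquivDegreeLT R d).finrank_eq,
    (Polynomial.degreeLTEquiv R _).finrank_eq, Module.finrank_fin_fun]

end Dehomogenize

section
variable {σ R : Type*} [CommSemiring R]

noncomputable def homogeneousMulRight {P : MvPolynomial σ R} {d e f : ℕ} (hP : P.IsHomogeneous e)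
    (hf : d + e = f) : homogeneousSubmodule σ R d →ₗ[R] homogeneousSubmodule σ R f :=
  (LinearMap.mulRight R P).restrict fun _ hA => hf ▸ IsHomogeneous.mul hA hP

end

variable {K : Type*} [Field K]

lemma isCoprime_dehomogenize [IsAlgClosed K] {P Q : MvPolynomial (Fin 2) K}
    (h : ∀ a : K, eval ![a, 1] P ≠ 0 ∨ eval ![a, 1] Q ≠ 0) :
    IsCoprime (dehomogenize P) (dehomogenize Q) := by
  rw [Polynomial.isCoprime_iff_aeval_ne_zero_of_isAlgClosed K K]
  simpa only [aeval_dehomogenize] using h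

lemma eq_zero_of_mul_add_mul_eq_zero {P Q A B : MvPolynomial (Fin 2) K} {n : ℕ} (hn : 0 < n)
    (hP : P.IsHomogeneous n) (hP₁₀ : eval ![1, 0] P ≠ 0) (hB : B.IsHomogeneous (n - 1))
    (hPQ : IsCoprime (dehomogenize P) (dehomogenize Q)) (h : A * P + B * Q = 0) :
    A = 0 ∧ B = 0 := by
  have hdegP : (dehomogenize P).natDegree = n :=
    hP.natDegree_dehomogenize_le.antisymm
      (Polynomial.le_natDegree_of_ne_zero (hP.eval_one_zero ▸ hP₁₀))
  have hdehom : dehomogenize A * dehomogenize P + dehomogenize B * dehomogenize Q = 0 := by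
    simpa only [map_add, map_mul, map_zero] using congrArg dehomogenize h
  have hdvd : dehomogenize P ∣ dehomogenize B * dehomogenize Q :=
    ⟨-dehomogenize A, by linear_combination hdehom⟩
  have hB' : dehomogenize B = 0 :=
    Polynomial.eq_zero_of_dvd_of_natDegree_lt (hPQ.dvd_of_dvd_mul_right hdvd)
      (hdegP ▸ hB.natDegree_dehomogenize_le.trans_lt (Nat.sub_lt hn one_pos))
  have hB0 : B = 0 := by rw [← hB.homogenize_dehomogenize, hB', Polynomial.homogenize_zero]
  have hP0 : P ≠ 0 := by rintro rfl; simp at hP₁₀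
  rw [hB0, zero_mul, add_zero] at h
  exact ⟨(mul_eq_zero.mp h).resolve_right hP0, hB0⟩

end MvPolynomial

theorem stmt7_general {k : Type*} [Field k] [IsAlgClosed k]
    (P Q : MvPolynomial (Fin 2) k) (n m : ℕ) (hn : 1 ≤ n) (hm : 1 ≤ m)
    (hPh : P.IsHomogeneous n) (hQh : Q.IsHomogeneous m)
    (hlead : ∀ a b : k, ¬(a = 0 ∧ b = 0) →
      ¬(eval ![a, b] P = 0 ∧ eval ![a, b] Q = 0)) :
    ∃ e : (homogeneousSubmodule (Fin 2) k (m - 1) ×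
            homogeneousSubmodule (Fin 2) k (n - 1)) ≃ₗ[k]
          homogeneousSubmodule (Fin 2) k (n + m - 1),
      ∀ (A : homogeneousSubmodule (Fin 2) k (m - 1))
        (B : homogeneousSubmodule (Fin 2) k (n - 1)),
        (e (A, B) : MvPolynomial (Fin 2) k) = (A : MvPolynomial (Fin 2) k) * P +
          (B : MvPolynomial (Fin 2) k) * Q := by
  let Φ := (homogeneousMulRight hPh (by omega : m - 1 + n = n + m - 1)).coprod
    (homogeneousMulRight hQh (by omega : n - 1 + m = n + m - 1))
  have hcop : IsCoprime (dehomogenize P) (dehomogenize Q) :=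
    isCoprime_dehomogenize fun a => not_and_or.mp (hlead a 1 (by simp))
  have hinj : Function.Injective Φ := by
    rw [← LinearMap.ker_eq_bot, LinearMap.ker_eq_bot']
    rintro ⟨A, B⟩ hAB
    replace hAB : A.1 * P + B.1 * Q = 0 := congrArg Subtype.val hAB
    obtain hP₁₀ | hQ₁₀ := not_and_or.mp (hlead 1 0 (by simp))
    · obtain ⟨hA, hB⟩ := eq_zero_of_mul_add_mul_eq_zero hn hPh hP₁₀ B.2 hcop hAB
      ext1 <;> ext1 <;> assumption
    · obtain ⟨hB, hA⟩ := eq_zero_of_mul_add_mul_eq_zero hm hQh hQ₁₀ A.2 hcop.symm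
        (by rwa [add_comm])
      ext1 <;> ext1 <;> assumption
  have hrank : Module.finrank k (homogeneousSubmodule (Fin 2) k (m - 1) ×
      homogeneousSubmodule (Fin 2) k (n - 1)) =
      Module.finrank k (homogeneousSubmodule (Fin 2) k (n + m - 1)) := by
    simp only [Module.finrank_prod, finrank_homogeneousSubmodule_fin_two]
    omega
  exact ⟨Φ.linearEquivOfInjective hinj hrank, fun _ _ => rfl⟩

theorem stmt7 {k : Type*} [Field k] [IsAlgClosed k]
    (P Q : MvPolynomial (Fin 2) k) (n m : ℕ) (hn : 1 ≤ n) (hm : 1 ≤ m)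
    (hP : P ≠ 0) (hQ : Q ≠ 0)
    (hPh : P.IsHomogeneous n) (hQh : Q.IsHomogeneous m)
    (hlead : ∀ a b : k, ¬(a = 0 ∧ b = 0) →
      ¬(eval ![a, b] P = 0 ∧ eval ![a, b] Q = 0)) :
    ∃ e : (homogeneousSubmodule (Fin 2) k (m - 1) ×
            homogeneousSubmodule (Fin 2) k (n - 1)) ≃ₗ[k]
          homogeneousSubmodule (Fin 2) k (n + m - 1),
      ∀ (A : homogeneousSubmodule (Fin 2) k (m - 1))
        (B : homogeneousSubmodule (Fin 2) k (n - 1)),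
        (e (A, B) : MvPolynomial (Fin 2) k) = (A : MvPolynomial (Fin 2) k) * P +
          (B : MvPolynomial (Fin 2) k) * Q :=
  stmt7_general P Q n m hn hm hPh hQh hlead
end
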